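/- Let X be a normed space of dimension at least 2. Then numerical radius Birkhoff orthogonality in B(X) is neither left additive nor right additive: there exist operators T, S, R with T ⊥_{vB} R and S ⊥_{vB} R but not (T+S) ⊥_{vB} R, and operators T', S', R' with T' ⊥_{vB} S' and T' ⊥_{vB} R' but not T' ⊥_{vB} (S'+R'). -/

import Mathlib

/-!
Fix a unit vector `u` with a norming functional `f` and, as `dim X ≥ 2`, a unit vector
`x₀ ∈ ker f` with a norming functional `g`. Let `P = f ⊗ u` and `Q = 1 - P`. An operator
`T` that attains its norm at a support pair `(x, φ)` is numerical-radius Birkhoff orthogonal to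
every `R` with `φ (R x) = 0`, since `φ ((T + αR) x) = φ (T x)`. Hence `1 ⊥ Q` and `-P ⊥ Q`
(test at `(u, f)`) and `1 ⊥ P` (test at `(x₀, g)`). On the other hand no operator of positive
numerical radius is orthogonal to itself, and `1 + (-P) = Q`, `P + Q = 1` with `v(Q), v(1) > 0`.
-/

open Filter Topology

variable {𝕜 : Type*} [RCLike 𝕜] {X : Type*} [NormedAddCommGroup X] [NormedSpace 𝕜 X]

/-- The numerical radius of a bounded linear operator on a normed space:
`v(T) = sup {|x*(Tx)| : x ∈ S_X, x* ∈ J(x)}`. -/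
noncomputable def nrad (T : X →L[𝕜] X) : ℝ :=
  sSup {r : ℝ | ∃ (x : X) (f : X →L[𝕜] 𝕜), ‖x‖ = 1 ∧ ‖f‖ = 1 ∧ f x = 1 ∧ r = ‖f (T x)‖}

/-- Numerical radius parallelism: `T ∥_v S`. -/
def NRadParallel (T S : X →L[𝕜] X) : Prop :=
  ∃ lam : 𝕜, ‖lam‖ = 1 ∧ nrad (T + lam • S) = nrad T + nrad S

/-- Numerical radius Birkhoff orthogonality: `T ⊥_{vB} S`. -/
def NRadBirkhoff (T S : X →L[𝕜] X) : Prop :=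
  ∀ α : 𝕜, nrad T ≤ nrad (T + α • S)

/-- `x ∈ S_X` and `f ∈ J(x)`. -/
structure IsSupportPair (x : X) (f : X →L[𝕜] 𝕜) : Prop where
  norm_eq_one : ‖x‖ = 1
  opNorm_eq_one : ‖f‖ = 1
  apply_eq_one : f x = 1

lemma IsSupportPair.norm_apply_le_opNorm {x : X} {f : X →L[𝕜] 𝕜} (h : IsSupportPair x f)
    (T : X →L[𝕜] X) : ‖f (T x)‖ ≤ ‖T‖ :=
  calc ‖f (T x)‖ ≤ ‖f‖ * (‖T‖ * ‖x‖) := f.le_opNorm_of_le (T.le_opNorm x)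
    _ = ‖T‖ := by rw [h.norm_eq_one, h.opNorm_eq_one, one_mul, mul_one]

lemma nrad_bddAbove (T : X →L[𝕜] X) :
    BddAbove {r : ℝ | ∃ (x : X) (f : X →L[𝕜] 𝕜), ‖x‖ = 1 ∧ ‖f‖ = 1 ∧ f x = 1 ∧ r = ‖f (T x)‖} :=
  ⟨‖T‖, fun _ ⟨_, _, hx, hf, hfx, hr⟩ ↦ hr ▸ IsSupportPair.norm_apply_le_opNorm ⟨hx, hf, hfx⟩ T⟩

lemma IsSupportPair.norm_apply_le_nrad {x : X} {f : X →L[𝕜] 𝕜} (h : IsSupportPair x f)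
    (T : X →L[𝕜] X) : ‖f (T x)‖ ≤ nrad T :=
  le_csSup (nrad_bddAbove T) ⟨x, f, h.norm_eq_one, h.opNorm_eq_one, h.apply_eq_one, rfl⟩

lemma nrad_le_of_forall {T : X →L[𝕜] X} {c : ℝ} (hc : 0 ≤ c)
    (h : ∀ (x : X) (f : X →L[𝕜] 𝕜), IsSupportPair x f → ‖f (T x)‖ ≤ c) : nrad T ≤ c := by
  refine Real.sSup_le ?_ hc
  rintro r ⟨x, f, hx, hf, hfx, rfl⟩
  exact h x f ⟨hx, hf, hfx⟩

lemma nrad_le_opNorm (T : X →L[𝕜] X) : nrad T ≤ ‖T‖ :=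
  nrad_le_of_forall (norm_nonneg T) fun _ _ h ↦ h.norm_apply_le_opNorm T

lemma nrad_zero : nrad (0 : X →L[𝕜] X) = 0 :=
  le_antisymm (nrad_le_of_forall le_rfl fun _ _ _ ↦ by simp)
    (Real.sSup_nonneg fun _ ⟨_, _, _, _, _, hr⟩ ↦ hr ▸ norm_nonneg _)

lemma exists_isSupportPair_smul {w : X} (hw : w ≠ 0) : ∃ (c : 𝕜) (f : X →L[𝕜] 𝕜),
    IsSupportPair (c • w) f := by
  have hnorm := norm_smul_inv_norm (𝕜 := 𝕜) hw
  obtain ⟨f, hf, hfw⟩ := exists_dual_vector 𝕜 _ (hnorm.symm ▸ one_ne_zero)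
  exact ⟨_, f, hnorm, hf, by rw [hfw, hnorm, RCLike.ofReal_one]⟩

lemma exists_isSupportPair [Nontrivial X] : ∃ (x : X) (f : X →L[𝕜] 𝕜), IsSupportPair x f := by
  obtain ⟨w, hw⟩ := exists_ne (0 : X)
  obtain ⟨c, f, h⟩ := exists_isSupportPair_smul (𝕜 := 𝕜) hw
  exact ⟨_, f, h⟩

lemma exists_isSupportPair_of_apply_eq_zero (hdim : 1 < Module.rank 𝕜 X) {u : X}
    {f : X →L[𝕜] 𝕜} (hfu : f u = 1) : ∃ (x : X) (g : X →L[𝕜] 𝕜), IsSupportPair x g ∧ f x = 0 := by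
  have hu : u ≠ 0 := by rintro rfl; simp at hfu
  obtain ⟨v, huv⟩ := exists_linearIndependent_pair_of_one_lt_rank hdim hu
  have hw : v - f v • u ≠ 0 := sub_ne_zero.mpr ((LinearIndependent.pair_iff' hu).mp huv _).symm
  obtain ⟨c, g, h⟩ := exists_isSupportPair_smul (𝕜 := 𝕜) hw
  exact ⟨_, g, h, by simp [hfu]⟩

lemma NRadBirkhoff.of_isSupportPair {x : X} {f : X →L[𝕜] 𝕜} (h : IsSupportPair x f)
    {T R : X →L[𝕜] X} (hT : ‖T‖ ≤ ‖f (T x)‖) (hR : f (R x) = 0) : NRadBirkhoff T R := fun α ↦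
  calc nrad T ≤ ‖T‖ := nrad_le_opNorm T
    _ ≤ ‖f (T x)‖ := hT
    _ = ‖f ((T + α • R) x)‖ := by simp [hR]
    _ ≤ nrad (T + α • R) := h.norm_apply_le_nrad _

lemma not_nradBirkhoff_self {T : X →L[𝕜] X} (hT : 0 < nrad T) : ¬ NRadBirkhoff T T := by
  intro h
  have := h (-1)
  rw [neg_one_smul, add_neg_cancel, nrad_zero] at this
  linarith

lemma IsSupportPair.nrad_pos {x : X} {f : X →L[𝕜] 𝕜} (h : IsSupportPair x f)
    {T : X →L[𝕜] X} (hT : T x = x) : 0 < nrad T :=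
  lt_of_lt_of_le (by simp [hT, h.apply_eq_one]) (h.norm_apply_le_nrad T)

lemma IsSupportPair.nradBirkhoff_one {x : X} {f : X →L[𝕜] 𝕜} (h : IsSupportPair x f)
    {R : X →L[𝕜] X} (hR : f (R x) = 0) : NRadBirkhoff 1 R :=
  .of_isSupportPair h (le_of_le_of_eq ContinuousLinearMap.norm_id_le (by simp [h.apply_eq_one])) hR

theorem stmt18 (hdim : 2 ≤ Module.rank 𝕜 X) :
    (∃ T S R : X →L[𝕜] X, NRadBirkhoff T R ∧ NRadBirkhoff S R ∧
      ¬ NRadBirkhoff (T + S) R) ∧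
    (∃ T' S' R' : X →L[𝕜] X, NRadBirkhoff T' S' ∧ NRadBirkhoff T' R' ∧
      ¬ NRadBirkhoff T' (S' + R')) := by
  have hdim' : 1 < Module.rank 𝕜 X := lt_of_lt_of_le (by norm_num) hdim
  have : Nontrivial X := rank_pos_iff_nontrivial.mp (zero_lt_one.trans hdim')
  obtain ⟨u, f, hu⟩ := exists_isSupportPair (𝕜 := 𝕜) (X := X)
  obtain ⟨x₀, g, hx₀, hfx₀⟩ := exists_isSupportPair_of_apply_eq_zero hdim' hu.apply_eq_one
  set P : X →L[𝕜] X := f.smulRight u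
  have hPu : P u = u := by simp [P, hu.apply_eq_one]
  have hPx₀ : P x₀ = 0 := by simp [P, hfx₀]
  have hQu : f ((1 - P) u) = 0 := by simp [hPu]
  have hQ : 0 < nrad (1 - P) := hx₀.nrad_pos (by simp [hPx₀])
  refine ⟨⟨1, -P, 1 - P, hu.nradBirkhoff_one hQu, ?_, ?_⟩,
    ⟨1, P, 1 - P, hx₀.nradBirkhoff_one (by simp [hPx₀]), hu.nradBirkhoff_one hQu, ?_⟩⟩
  · refine .of_isSupportPair hu ?_ hQu
    simp [P, hu.apply_eq_one, ContinuousLinearMap.norm_smulRight_apply, hu.norm_eq_one, hu.opNorm_eq_one]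
  · rw [← sub_eq_add_neg]
    exact not_nradBirkhoff_self hQ
  · rw [add_sub_cancel]
    exact not_nradBirkhoff_self (hu.nrad_pos rfl)
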